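/- arXiv:1304.3484 — 3 statements merged into one kernel-verified Lean document; each statement's English description precedes it below -/
import Mathlib

section
/- Let h>0, let p be a nonzero real number, and let t,a be real numbers. Set s := (t−a)/h and define the h-factorial function by r_h^{(q)} := h^q·Γ(r/h+1)/Γ(r/h+1−q). Assume s+1 ≠ 0 and that s+1−p is not a nonpositive integer. Then the forward h-difference of the h-factorial satisfies ((t+h−a)_h^{(p)} − (t−a)_h^{(p)})/h = p·(t−a)_h^{(p−1)}. -/
/-- The `h`-factorial function `r_h^{(q)} = h^q · Γ(r/h+1)/Γ(r/h+1−q)`. -/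
noncomputable def hFactorial (h r q : ℝ) : ℝ :=
  h ^ q * (Real.Gamma (r / h + 1) / Real.Gamma (r / h + 1 - q))

theorem forward_h_difference_of_h_factorial
    (h p t a : ℝ) (hh : 0 < h) (hp : p ≠ 0)
    (h1 : (t - a) / h + 1 ≠ 0)
    (h2 : ∀ m : ℕ, (t - a) / h + 1 - p ≠ -(m : ℝ)) :
    (hFactorial h (t + h - a) p - hFactorial h (t - a) p) / h
      = p * hFactorial h (t - a) (p - 1) := by
  have hne : h ≠ 0 := ne_of_gt hh
  have hs1 : (t + h - a) / h = (t - a) / h + 1 := by field_simp; ring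
  set s : ℝ := (t - a) / h with hsdef
  clear_value s
  have hsp : s + 1 - p ≠ 0 := by simpa using h2 0
  have hGp : Real.Gamma (s + 1 - p) ≠ 0 := Real.Gamma_ne_zero (fun m => h2 m)
  have e1 : Real.Gamma (s + 1 + 1) = (s + 1) * Real.Gamma (s + 1) :=
    Real.Gamma_add_one h1
  have e2 : Real.Gamma (s + 1 - p + 1) = (s + 1 - p) * Real.Gamma (s + 1 - p) :=
    Real.Gamma_add_one hsp
  have hrp : h ^ (p - 1) = h ^ p / h := by
    rw [Real.rpow_sub hh, Real.rpow_one]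
  unfold hFactorial
  rw [hs1, ← hsdef, show s + 1 + 1 - p = s + 1 - p + 1 by ring,
    show s + 1 - (p - 1) = s + 1 - p + 1 by ring, e1, e2, hrp]
  field_simp
  ring
end

section
/- Let h>0, α>0 and μ≥0. Define ψ: ℕ→ℝ by ψ(k) := h^μ·Γ(k+μ+1)/Γ(k+1) (this is the h-factorial value (kh+μh)_h^{(μ)}). Then for every n∈ℕ, (S_α ψ)(n) = (Γ(μ+1)/Γ(μ+α+1))·h^{μ+α}·Γ(n+μ+α+1)/Γ(n+1); that is, the fractional h-sum of order α of the h-factorial function of order μ is Γ(μ+1)/Γ(μ+α+1) times the h-factorial function of order μ+α, evaluated at the shifted point. -/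
/-!
`c_γ(m) = Γ(γ+m)/(Γ(γ) m!)` is the multiset coefficient `multichoose γ m`, the `m`-th coefficient
of `(1 - x)^(-γ)`, so `c_α * c_β = c_(α+β)` (Chu–Vandermonde, applied to `-α` and `-β`).
The `h`-factorial is `ψ = h^μ Γ(μ+1) c_(μ+1)`, hence `S_α ψ = h^(μ+α) Γ(μ+1) c_(α+μ+1)`, which is
the right-hand side.
-/

/-- `c γ m = Γ(γ+m)/(Γ(γ)·Γ(m+1))`. -/
noncomputable def cCoeff (γ : ℝ) (m : ℕ) : ℝ :=
  Real.Gamma (γ + m) / (Real.Gamma γ * Real.Gamma (m + 1))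

/-- Fractional `h`-sum of order `γ`: `(S_γ u)(n) = h^γ·∑_{k=0}^{n} c_γ(n−k)·u(k)`. -/
noncomputable def fracSum (h γ : ℝ) (u : ℕ → ℝ) (n : ℕ) : ℝ :=
  h ^ γ * ∑ k ∈ Finset.range (n + 1), cCoeff γ (n - k) * u k

open Finset Polynomial

namespace Ring

theorem multichoose_eq_negOnePow_smul_choose_neg {R : Type*} [Ring R] [BinomialRing R] (r : R)
    (n : ℕ) : multichoose r n = Int.negOnePow n • choose (-r) n := by
  rw [choose_neg', smul_smul, ← Int.negOnePow_add, Int.negOnePow_even _ (by simp), one_smul]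

theorem add_multichoose_eq {R : Type*} [Ring R] [BinomialRing R] {r s : R} (k : ℕ)
    (h : Commute r s) :
    multichoose (r + s) k = ∑ ij ∈ antidiagonal k, multichoose r ij.1 * multichoose s ij.2 := by
  simp only [multichoose_eq_negOnePow_smul_choose_neg, neg_add,
    add_choose_eq k h.neg_left.neg_right, smul_sum]
  refine sum_congr rfl fun ij hij => ?_
  rw [smul_mul_smul_comm, ← Int.negOnePow_add, ← Nat.cast_add,
    HasAntidiagonal.mem_antidiagonal.mp hij]

end Ring

namespace Real

theorem Gamma_add_nat_eq_ascPochhammer_mul {γ : ℝ} (hγ : 0 < γ) (n : ℕ) :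
    Gamma (γ + n) = (ascPochhammer ℝ n).eval γ * Gamma γ := by
  induction n with
  | zero => simp
  | succ n ih =>
    rw [Nat.cast_succ, ← add_assoc, Gamma_add_one (by positivity), ih, ascPochhammer_succ_eval]
    ring

end Real

theorem cCoeff_eq_multichoose {γ : ℝ} (hγ : 0 < γ) (m : ℕ) :
    cCoeff γ m = Ring.multichoose γ m := by
  have h_fac := Ring.factorial_nsmul_multichoose_eq_ascPochhammer γ m
  rw [ascPochhammer_smeval_eq_eval, nsmul_eq_mul] at h_fac
  rw [cCoeff, Real.Gamma_add_nat_eq_ascPochhammer_mul hγ, Real.Gamma_nat_eq_factorial, ← h_fac]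
  field_simp [(Real.Gamma_pos_of_pos hγ).ne']

theorem cCoeff_convolution {α β : ℝ} (hα : 0 < α) (hβ : 0 < β) (n : ℕ) :
    ∑ k ∈ range (n + 1), cCoeff α (n - k) * cCoeff β k = cCoeff (α + β) n := by
  rw [cCoeff_eq_multichoose (add_pos hα hβ), add_comm α β, Ring.add_multichoose_eq n (.all β α),
    Nat.sum_antidiagonal_eq_sum_range_succ (fun i j => Ring.multichoose β i * Ring.multichoose α j)]
  refine sum_congr rfl fun k _ => ?_
  rw [cCoeff_eq_multichoose hα, cCoeff_eq_multichoose hβ, mul_comm]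

theorem Gamma_natCast_add_div_eq_mul_cCoeff {γ : ℝ} (hγ : 0 < γ) (k : ℕ) :
    Real.Gamma (k + γ) / Real.Gamma (k + 1) = Real.Gamma γ * cCoeff γ k := by
  rw [cCoeff, add_comm (k : ℝ) γ]
  field_simp [(Real.Gamma_pos_of_pos hγ).ne']

theorem fracSum_const_mul (h γ c : ℝ) (u : ℕ → ℝ) (n : ℕ) :
    fracSum h γ (fun k => c * u k) n = c * fracSum h γ u n := by
  simp only [fracSum, mul_sum]
  exact sum_congr rfl fun k _ => by ring

theorem fracSum_cCoeff {h α β : ℝ} (hα : 0 < α) (hβ : 0 < β) (n : ℕ) :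
    fracSum h α (cCoeff β) n = h ^ α * cCoeff (α + β) n := by
  rw [fracSum, cCoeff_convolution hα hβ]

theorem fracSum_of_h_factorial (h α μ : ℝ) (hh : 0 < h) (hα : 0 < α) (hμ : 0 ≤ μ)
    (ψ : ℕ → ℝ)
    (hψ : ∀ k : ℕ, ψ k = h ^ μ * (Real.Gamma ((k : ℝ) + μ + 1) / Real.Gamma ((k : ℝ) + 1)))
    (n : ℕ) :
    fracSum h α ψ n
      = Real.Gamma (μ + 1) / Real.Gamma (μ + α + 1) * h ^ (μ + α)
        * (Real.Gamma ((n : ℝ) + μ + α + 1) / Real.Gamma ((n : ℝ) + 1)) := by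
  have hμ1 : 0 < μ + 1 := by linarith
  have hψ' : ψ = fun k => h ^ μ * Real.Gamma (μ + 1) * cCoeff (μ + 1) k := by
    funext k
    rw [hψ, add_assoc, Gamma_natCast_add_div_eq_mul_cCoeff hμ1, mul_assoc]
  have hΓ : Real.Gamma (n + μ + α + 1) / Real.Gamma (n + 1)
      = Real.Gamma (μ + α + 1) * cCoeff (α + (μ + 1)) n := by
    rw [show μ + α + 1 = α + (μ + 1) by ring, ← Gamma_natCast_add_div_eq_mul_cCoeff (by positivity)]
    ring_nf
  rw [hψ', fracSum_const_mul, fracSum_cCoeff hα hμ1, hΓ, Real.rpow_add hh]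
  field_simp [(Real.Gamma_pos_of_pos (by positivity : 0 < μ + α + 1)).ne']
end

section
/- Let h>0, α,β∈(0,1] and k,s∈ℕ. Then for every n∈ℕ, the fractional h-sum of order α of the function φ_{k,s} satisfies (S_α φ_{k,s})(n) = φ_{k+1,s}(n+1). (This is the first power-rule formula of Proposition 5 of the paper: (_0Δ_h^{−α}φ_{k,s})(nh+a) = φ_{k+1,s}(nh) with a=(α−1)h.) -/
/-- The function `φ_{k,s}` of the paper. -/
noncomputable def phi (h α β : ℝ) (k s : ℕ) (n : ℤ) : ℝ :=
  if (k : ℤ) ≤ n then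
    Real.Gamma ((n : ℝ) - (k : ℝ) + 1 + (k : ℝ) * α + (s : ℝ) * β)
      / (Real.Gamma ((k : ℝ) * α + (s : ℝ) * β + 1) * Real.Gamma ((n : ℝ) - (k : ℝ) + 1))
      * h ^ ((k : ℝ) * α + (s : ℝ) * β)
  else 0

/-!
Write `γ = kα + sβ`. Since `φ_{k,s}` vanishes below `k` and `φ_{k,s}(k + m) = h^γ c_{γ+1}(m)`,
the fractional sum at `n = k + N` reduces to the convolution `∑ c_α(N - m) c_{γ+1}(m)`.
The coefficient `c_a(m) = Γ(a + m)/(Γ(a) m!)` is the multiset coefficient `a(a+1)⋯(a+m-1)/m!`,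
i.e. the `m`-th coefficient of `(1 - x)^{-a}`, so this convolution is `c_{α+γ+1}(N)` by
Chu–Vandermonde, which is exactly `h^{-(α+γ)} φ_{k+1,s}(k + 1 + N)`.
-/

open Finset Polynomial

theorem Real.Gamma_add_nat_eq_mul_ascPochhammer_eval {γ : ℝ} (hγ : 0 < γ) (m : ℕ) :
    Real.Gamma (γ + m) = Real.Gamma γ * (ascPochhammer ℝ m).eval γ := by
  induction m with
  | zero => simp
  | succ m ih =>
    rw [Nat.cast_succ, ← add_assoc, Real.Gamma_add_one (by positivity), ih,
      ascPochhammer_succ_eval]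
    ring

theorem Ring.multichoose_add {R : Type*} [Ring R] [BinomialRing R] {r s : R} (k : ℕ)
    (h : Commute r s) :
    multichoose (r + s) k = ∑ ij ∈ antidiagonal k, multichoose r ij.1 * multichoose s ij.2 := by
  have multichoose_eq_negOnePow_smul_choose (x : R) (n : ℕ) :
      multichoose x n = Int.negOnePow n • choose (-x) n := by
    rw [choose_neg', smul_smul, Int.units_mul_self, one_smul]
  simp only [multichoose_eq_negOnePow_smul_choose, neg_add, add_choose_eq k h.neg_left.neg_right,
    smul_sum, smul_mul_smul_comm, ← Int.negOnePow_add]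
  refine sum_congr rfl fun ij hij => ?_
  rw [← Nat.cast_add, mem_antidiagonal.mp hij]

theorem cCoeff_add {a b : ℝ} (ha : 0 < a) (hb : 0 < b) (N : ℕ) :
    cCoeff (a + b) N = ∑ m ∈ range (N + 1), cCoeff a (N - m) * cCoeff b m := by
  rw [add_comm a b, cCoeff_eq_multichoose (by positivity), Ring.multichoose_add N (.all b a),
    Nat.sum_antidiagonal_eq_sum_range_succ (fun i j => Ring.multichoose b i * Ring.multichoose a j)]
  simp only [cCoeff_eq_multichoose ha, cCoeff_eq_multichoose hb, mul_comm]

theorem fracSum_add_of_eq_zero {u : ℕ → ℝ} {k : ℕ} (hu : ∀ j < k, u j = 0) (h γ : ℝ) (N : ℕ) :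
    fracSum h γ u (k + N) = fracSum h γ (fun m => u (k + m)) N := by
  rw [fracSum, fracSum, add_assoc, sum_range_add, sum_eq_zero fun j hj => by
    rw [hu j (mem_range.mp hj), mul_zero], zero_add]
  congr 1
  refine sum_congr rfl fun m _ => ?_
  rw [Nat.add_sub_add_left]

theorem fracSum_eq_zero {u : ℕ → ℝ} {n : ℕ} (hu : ∀ j ≤ n, u j = 0) (h γ : ℝ) :
    fracSum h γ u n = 0 := by
  rw [fracSum, sum_eq_zero fun j hj => by
    rw [hu j (Nat.lt_succ_iff.mp (mem_range.mp hj)), mul_zero], mul_zero]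

theorem fracSum_cCoeff_mul_const {a b : ℝ} (ha : 0 < a) (hb : 0 < b) (h c : ℝ) (N : ℕ) :
    fracSum h a (fun m => cCoeff b m * c) N = h ^ a * cCoeff (a + b) N * c := by
  rw [fracSum, cCoeff_add ha hb, mul_assoc, sum_mul]
  simp only [mul_assoc]

theorem phi_of_lt {h α β : ℝ} {k s : ℕ} {n : ℤ} (hn : n < k) : phi h α β k s n = 0 :=
  if_neg hn.not_ge

theorem phi_natCast_add (h α β : ℝ) (k s m : ℕ) :
    phi h α β k s ((k + m : ℕ) : ℤ)
      = cCoeff ((k : ℝ) * α + (s : ℝ) * β + 1) m * h ^ ((k : ℝ) * α + (s : ℝ) * β) := by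
  rw [phi, if_pos (by omega), cCoeff]
  push_cast
  ring_nf

theorem fracSum_phi_first_power_rule_general (h α β : ℝ) (hh : 0 < h)
    (hα1 : 0 < α) (hβ1 : 0 < β)
    (k s : ℕ) (n : ℕ) :
    fracSum h α (fun m : ℕ => phi h α β k s (m : ℤ)) n
      = phi h α β (k + 1) s ((n : ℤ) + 1) := by
  rcases le_or_gt k n with hkn | hnk
  · obtain ⟨N, rfl⟩ := Nat.exists_eq_add_of_le hkn
    have hγ : 0 < (k : ℝ) * α + (s : ℝ) * β + 1 := by positivity
    rw [fracSum_add_of_eq_zero (fun j hj => phi_of_lt (by exact_mod_cast hj))]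
    simp only [phi_natCast_add]
    rw [fracSum_cCoeff_mul_const hα1 hγ,
      show ((k + N : ℕ) : ℤ) + 1 = ((k + 1 + N : ℕ) : ℤ) by push_cast; ring, phi_natCast_add,
      show ((k + 1 : ℕ) : ℝ) * α + s * β = α + (k * α + s * β) by push_cast; ring,
      Real.rpow_add hh α, add_assoc α]
    ring
  · rw [fracSum_eq_zero (fun j hj => phi_of_lt (by omega)), phi_of_lt (by omega)]

theorem fracSum_phi_first_power_rule (h α β : ℝ) (hh : 0 < h)
    (hα1 : 0 < α) (hα2 : α ≤ 1) (hβ1 : 0 < β) (hβ2 : β ≤ 1)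
    (k s : ℕ) (n : ℕ) :
    fracSum h α (fun m : ℕ => phi h α β k s (m : ℤ)) n
      = phi h α β (k + 1) s ((n : ℤ) + 1) :=
  fracSum_phi_first_power_rule_general h α β hh hα1 hβ1 k s n
end
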